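/- arXiv:1712.09226 — 7 statements merged into one kernel-verified Lean document; each statement's English description precedes it below -/
import Mathlib

section
/- Let A = {a_0, a_1, ..., a_{k-1}} be a set of k ≥ 3 integers with 0 = a_0 < a_1 < ... < a_{k-1}. If a_k is an integer with a_k > a_{k-2} + a_{k-1} and A' = A ∪ {a_k}, then |A' ∔ A'| = |A ∔ A| + k. -/
open Finset
open scoped Pointwise

/-- The restricted sumset `A ∔ A = {a + b : a, b ∈ A, a ≠ b}`. -/
def rsum (A : Finset ℤ) : Finset ℤ :=
  ((A ×ˢ A).filter fun p => p.1 ≠ p.2).image fun p => p.1 + p.2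

theorem stmt5 (k : ℕ) (hk : 3 ≤ k) (a : ℕ → ℤ) (h0 : a 0 = 0)
    (hmono : ∀ i < k, a i < a (i + 1))
    (hak : a k > a (k - 2) + a (k - 1))
    (A A' : Finset ℤ) (hA : A = (Finset.range k).image a)
    (hA' : A' = insert (a k) A) :
    (rsum A').card = (rsum A).card + k := by
  -- strict monotonicity up to k
  have hstrict : ∀ j ≤ k, ∀ i < j, a i < a j := by
    intro j hjk
    induction j with
    | zero => intro i hi; omega
    | succ n ih =>
      intro i hi
      have h1 : a n < a (n + 1) := hmono n (by omega)
      rcases Nat.lt_or_ge i n with h | h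
      · have := ih (by omega) i h
        omega
      · have hin : i = n := by omega
        rw [hin]; exact h1
  have hle : ∀ i j, i ≤ j → j ≤ k → a i ≤ a j := by
    intro i j hij hjk
    rcases Nat.lt_or_ge i j with h | h
    · exact le_of_lt (hstrict j hjk i h)
    · have : i = j := by omega
      rw [this]
  have hnonneg : ∀ i, i ≤ k → 0 ≤ a i := by
    intro i hi
    have := hle 0 i (by omega) hi
    omega
  -- sums of two distinct elements of A are < a k
  have hsum : ∀ i j, i < j → j < k → a i + a j < a k := by
    intro i j hij hjk
    have h1 : a i ≤ a (k - 2) := hle i (k - 2) (by omega) (by omega)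
    have h2 : a j ≤ a (k - 1) := hle j (k - 1) (by omega) (by omega)
    omega
  have hbound : ∀ x ∈ rsum A, x < a k := by
    intro x hx
    simp only [rsum, mem_image, mem_filter, mem_product, hA, mem_range] at hx
    obtain ⟨⟨p, q⟩, ⟨⟨hp, hq⟩, hne⟩, rfl⟩ := hx
    simp only [mem_image, mem_range] at hp hq
    obtain ⟨i, hi, rfl⟩ := hp
    obtain ⟨j, hj, rfl⟩ := hq
    rcases Nat.lt_trichotomy i j with h | h | h
    · exact hsum i j h hj
    · exact absurd (by rw [h]) hne
    · have := hsum j i h hi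
      omega
  have hakA : a k ∉ A := by
    intro h
    rw [hA] at h
    simp only [mem_image, mem_range] at h
    obtain ⟨i, hi, hie⟩ := h
    have := hstrict k le_rfl i hi
    omega
  -- the set decomposition
  have hset : rsum A' = rsum A ∪ A.image (fun x => a k + x) := by
    ext x
    simp only [rsum, mem_union, mem_image, mem_filter, mem_product, hA', mem_insert]
    constructor
    · rintro ⟨⟨p, q⟩, ⟨⟨hp, hq⟩, hne⟩, rfl⟩
      rcases hp with rfl | hp
      · rcases hq with rfl | hq
        · exact absurd rfl hne
        · exact Or.inr ⟨q, hq, rfl⟩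
      · rcases hq with rfl | hq
        · exact Or.inr ⟨p, hp, by ring⟩
        · exact Or.inl ⟨⟨p, q⟩, ⟨⟨hp, hq⟩, hne⟩, rfl⟩
    · rintro (⟨⟨p, q⟩, ⟨⟨hp, hq⟩, hne⟩, rfl⟩ | ⟨y, hy, rfl⟩)
      · exact ⟨⟨p, q⟩, ⟨⟨Or.inr hp, Or.inr hq⟩, hne⟩, rfl⟩
      · refine ⟨⟨a k, y⟩, ⟨⟨Or.inl rfl, Or.inr hy⟩, ?_⟩, rfl⟩
        intro h
        simp only at h
        exact hakA (h ▸ hy)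
  have hdisj : Disjoint (rsum A) (A.image (fun x => a k + x)) := by
    rw [Finset.disjoint_left]
    intro x hx hx'
    have h1 := hbound x hx
    simp only [mem_image] at hx'
    obtain ⟨y, hy, rfl⟩ := hx'
    rw [hA] at hy
    simp only [mem_image, mem_range] at hy
    obtain ⟨i, hi, rfl⟩ := hy
    have := hnonneg i (by omega)
    omega
  have hAcard : A.card = k := by
    rw [hA, Finset.card_image_of_injOn, Finset.card_range]
    intro i hi j hj hij
    simp only [coe_range, Set.mem_Iio] at hi hj
    by_contra h
    rcases Nat.lt_or_ge i j with h' | h'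
    · have := hstrict j (by omega) i h'
      omega
    · have := hstrict i (by omega) j (by omega)
      omega
  rw [hset, Finset.card_union_of_disjoint hdisj,
    Finset.card_image_of_injective _ (add_right_injective (a k)), hAcard]
end

section
/- If there exists a finite set A of integers with |A ∔ A| ≥ |A - A| + |A| + 1, then there exist infinitely many restricted-sum-dominant sets of integers of cardinality |A| + 1. -/
open Finset
open scoped Pointwise

lemma rsum_mono {A B : Finset ℤ} (h : A ⊆ B) : rsum A ⊆ rsum B := by
  apply Finset.image_subset_image
  apply Finset.filter_subset_filter
  exact Finset.product_subset_product h h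

lemma rsum_image_add (B : Finset ℤ) (c : ℤ) :
    rsum (B.image (· + c)) = (rsum B).image (· + 2*c) := by
  ext x
  simp only [rsum, mem_image, mem_filter, mem_product, Prod.exists]
  constructor
  · rintro ⟨a, b, ⟨⟨⟨a', ha', rfl⟩, ⟨b', hb', rfl⟩⟩, hne⟩, rfl⟩
    exact ⟨a' + b', ⟨a', b', ⟨⟨ha', hb'⟩, by omega⟩, rfl⟩, by ring⟩
  · rintro ⟨y, ⟨a, b, ⟨⟨ha, hb⟩, hne⟩, rfl⟩, rfl⟩
    exact ⟨a + c, b + c, ⟨⟨⟨a, ha, rfl⟩, ⟨b, hb, rfl⟩⟩, by omega⟩, by ring⟩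

lemma sub_image_add (B : Finset ℤ) (c : ℤ) :
    (B.image (· + c)) - (B.image (· + c)) = B - B := by
  ext x
  simp only [Finset.mem_sub, mem_image]
  constructor
  · rintro ⟨a, ⟨a', ha', rfl⟩, b, ⟨b', hb', rfl⟩, rfl⟩
    exact ⟨a', ha', b', hb', by ring⟩
  · rintro ⟨a, ha, b, hb, rfl⟩
    exact ⟨a + c, ⟨a, ha, rfl⟩, b + c, ⟨b, hb, rfl⟩, by ring⟩

theorem stmt8 (A : Finset ℤ) (h : (rsum A).card ≥ (A - A).card + A.card + 1) :
    {B : Finset ℤ | B.card = A.card + 1 ∧ (B - B).card < (rsum B).card}.Infinite := by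
  have hA : A.Nonempty := by
    rcases A.eq_empty_or_nonempty with rfl | hA
    · simp [rsum] at h
    · exact hA
  set u := A.max' hA with hu
  set l := A.min' hA with hl
  have hlu : l ≤ u := A.min'_le u (A.max'_mem hA)
  set t : ℤ := 2*u - l + 1 with ht
  have htu : u < t := by omega
  have htA : t ∉ A := fun hm => absurd (A.le_max' t hm) (by omega)
  set B : Finset ℤ := insert t A with hB
  have hcardB : B.card = A.card + 1 := Finset.card_insert_of_notMem htA
  -- bound on B - B
  have hsub : B - B ⊆ (A - A) ∪ A.image (fun a => t - a) ∪ A.image (fun a => a - t) := by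
    intro x hx
    rw [Finset.mem_sub] at hx
    obtain ⟨a, ha, b, hb, rfl⟩ := hx
    simp only [hB, Finset.mem_insert] at ha hb
    simp only [Finset.mem_union, Finset.mem_image, Finset.mem_sub]
    rcases ha with rfl | ha <;> rcases hb with rfl | hb
    · obtain ⟨c, hc⟩ := hA
      exact Or.inl (Or.inl ⟨c, hc, c, hc, by ring⟩)
    · exact Or.inl (Or.inr ⟨b, hb, rfl⟩)
    · exact Or.inr ⟨a, ha, rfl⟩
    · exact Or.inl (Or.inl ⟨a, ha, b, hb, rfl⟩)
  have hsubcard : (B - B).card ≤ (A - A).card + A.card + A.card := by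
    calc (B - B).card ≤ ((A - A) ∪ A.image (fun a => t - a) ∪ A.image (fun a => a - t)).card :=
          Finset.card_le_card hsub
      _ ≤ ((A - A) ∪ A.image (fun a => t - a)).card + (A.image (fun a => a - t)).card :=
          Finset.card_union_le _ _
      _ ≤ ((A - A).card + (A.image (fun a => t - a)).card) + (A.image (fun a => a - t)).card :=
          Nat.add_le_add_right (Finset.card_union_le _ _) _
      _ ≤ (A - A).card + A.card + A.card :=
          Nat.add_le_add (Nat.add_le_add_left Finset.card_image_le _) Finset.card_image_le
  -- lower bound on rsum B
  have hle2u : ∀ x ∈ rsum A, x ≤ 2*u := by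
    intro x hx
    simp only [rsum, mem_image, mem_filter, mem_product, Prod.exists] at hx
    obtain ⟨a, b, ⟨⟨ha, hb⟩, _⟩, rfl⟩ := hx
    have := A.le_max' a ha
    have := A.le_max' b hb
    omega
  have hdisj : Disjoint (rsum A) (A.image (fun a => t + a)) := by
    rw [Finset.disjoint_left]
    intro x hx hx'
    have h1 := hle2u x hx
    simp only [mem_image] at hx'
    obtain ⟨a, ha, rfl⟩ := hx'
    have := A.min'_le a ha
    omega
  have hunion : (rsum A) ∪ A.image (fun a => t + a) ⊆ rsum B := by
    apply Finset.union_subset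
    · exact rsum_mono (Finset.subset_insert t A)
    · intro x hx
      simp only [mem_image] at hx
      obtain ⟨a, ha, rfl⟩ := hx
      simp only [rsum, mem_image, mem_filter, mem_product, Prod.exists]
      refine ⟨t, a, ⟨⟨Finset.mem_insert_self t A, Finset.mem_insert_of_mem ha⟩, ?_⟩, rfl⟩
      have := A.le_max' a ha
      omega
  have hrsumcard : (rsum A).card + A.card ≤ (rsum B).card := by
    have := Finset.card_le_card hunion
    rw [Finset.card_union_of_disjoint hdisj] at this
    rwa [Finset.card_image_of_injective _ (add_right_injective t)] at this
  have hKey : (B - B).card < (rsum B).card := by omega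
  -- translates
  apply Set.infinite_of_injective_forall_mem
    (f := fun c : ℤ => B.image (· + c))
  · intro c c' hcc
    simp only at hcc
    have hmax : ∀ (d : ℤ) (x : ℤ), x ∈ B.image (· + d) → x ≤ t + d := by
      intro d x hx
      simp only [mem_image] at hx
      obtain ⟨a, ha, rfl⟩ := hx
      simp only [hB, Finset.mem_insert] at ha
      rcases ha with rfl | ha
      · omega
      · have := A.le_max' a ha; omega
    have h1 : t + c ∈ B.image (· + c) :=
      Finset.mem_image_of_mem _ (Finset.mem_insert_self t A)
    have h2 : t + c' ∈ B.image (· + c') :=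
      Finset.mem_image_of_mem _ (Finset.mem_insert_self t A)
    rw [hcc] at h1
    rw [← hcc] at h2
    have := hmax c' _ h1
    have := hmax c _ h2
    omega
  · intro c
    constructor
    · rw [Finset.card_image_of_injective _ (add_left_injective c)]
      exact hcardB
    · rw [sub_image_add, rsum_image_add,
        Finset.card_image_of_injective _ (add_left_injective (2*c))]
      exact hKey
end

section
/- Let A be a nonempty finite set of nonnegative integers with maximum a*, and let m be a positive integer with m > 2a*. For a positive integer n, define B := {∑_{i=0}^{n-1} a_i m^i : a_i ∈ A for all i}. Then |B ∔ B| ≥ |A ∔ A|^n. -/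
open Finset
open scoped Pointwise

lemma digits_inj (m : ℤ) (hm : 0 < m) :
    ∀ (n : ℕ) (s t : Fin n → ℤ),
      (∀ i, 0 ≤ s i) → (∀ i, s i < m) → (∀ i, 0 ≤ t i) → (∀ i, t i < m) →
      (∑ i, s i * m ^ (i : ℕ)) = (∑ i, t i * m ^ (i : ℕ)) → s = t := by
  intro n
  induction n with
  | zero => intro s t _ _ _ _ _; funext i; exact i.elim0
  | succ n ih =>
    intro s t hs0 hs1 ht0 ht1 hsum
    rw [Fin.sum_univ_succ, Fin.sum_univ_succ] at hsum
    have hS : ∀ (u : Fin (n+1) → ℤ),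
        (∑ i : Fin n, u i.succ * m ^ ((i.succ : Fin (n+1)) : ℕ))
          = m * ∑ i : Fin n, u i.succ * m ^ (i : ℕ) := by
      intro u
      rw [Finset.mul_sum]
      apply Finset.sum_congr rfl
      intro i _
      simp [Fin.val_succ, pow_succ]
      ring
    rw [hS s, hS t] at hsum
    simp only [Fin.val_zero, pow_zero, mul_one] at hsum
    have h0 : s 0 = t 0 := by
      have e1 : (s 0 + m * ∑ i : Fin n, s i.succ * m ^ (i : ℕ)) % m = s 0 % m :=
        Int.add_mul_emod_self_left ..
      have e2 : (t 0 + m * ∑ i : Fin n, t i.succ * m ^ (i : ℕ)) % m = t 0 % m :=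
        Int.add_mul_emod_self_left ..
      rw [Int.emod_eq_of_lt (hs0 0) (hs1 0)] at e1
      rw [Int.emod_eq_of_lt (ht0 0) (ht1 0)] at e2
      rw [← e1, ← e2, hsum]
    have hsum' : (∑ i : Fin n, s i.succ * m ^ (i : ℕ))
        = ∑ i : Fin n, t i.succ * m ^ (i : ℕ) := by
      have : m * (∑ i : Fin n, s i.succ * m ^ (i : ℕ))
          = m * ∑ i : Fin n, t i.succ * m ^ (i : ℕ) := by linarith
      exact mul_left_cancel₀ hm.ne' this
    have htail : (fun i : Fin n => s i.succ) = fun i => t i.succ :=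
      ih _ _ (fun i => hs0 _) (fun i => hs1 _) (fun i => ht0 _) (fun i => ht1 _) hsum'
    funext i
    refine Fin.cases h0 (fun j => ?_) i
    exact congrFun htail j

theorem stmt10 (A : Finset ℤ) (hA : A.Nonempty) (hpos : ∀ a ∈ A, 0 ≤ a)
    (m : ℤ) (hm : 0 < m) (hm2 : m > 2 * A.max' hA)
    (n : ℕ) (hn : 0 < n)
    (B : Finset ℤ)
    (hB : B = (Fintype.piFinset fun _ : Fin n => A).image
        fun f => ∑ i : Fin n, f i * m ^ (i : ℕ)) :
    (rsum B).card ≥ (rsum A).card ^ n := by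
  set a := A.max' hA with ha
  have ha0 : 0 ≤ a := hpos _ (A.max'_mem hA)
  have hAbound : ∀ x ∈ A, 0 ≤ x ∧ x < m := by
    intro x hx
    have := A.le_max' x hx
    exact ⟨hpos x hx, by omega⟩
  have hrbound : ∀ x ∈ rsum A, 0 ≤ x ∧ x < m := by
    intro x hx
    simp only [rsum, mem_image, mem_filter, mem_product] at hx
    obtain ⟨p, ⟨⟨h1, h2⟩, _⟩, rfl⟩ := hx
    have b1 := hpos _ h1
    have b2 := hpos _ h2
    have c1 := A.le_max' _ h1
    have c2 := A.le_max' _ h2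
    constructor <;> omega
  set f : (Fin n → ℤ) → ℤ := fun s => ∑ i, s i * m ^ (i : ℕ) with hf
  have key : ((Fintype.piFinset fun _ : Fin n => rsum A).image f) ⊆ rsum B := by
    intro x hx
    simp only [mem_image, Fintype.mem_piFinset] at hx
    obtain ⟨s, hs, rfl⟩ := hx
    have hex : ∀ i, ∃ p : ℤ × ℤ, p.1 ∈ A ∧ p.2 ∈ A ∧ p.1 ≠ p.2 ∧ p.1 + p.2 = s i := by
      intro i
      have := hs i
      simp only [rsum, mem_image, mem_filter, mem_product] at this
      obtain ⟨p, ⟨⟨h1, h2⟩, h3⟩, h4⟩ := this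
      exact ⟨p, h1, h2, h3, h4⟩
    choose p hp1 hp2 hp3 hp4 using hex
    have hxB : f (fun i => (p i).1) ∈ B := by
      rw [hB]
      exact mem_image_of_mem _ (by simp only [Fintype.mem_piFinset]; exact hp1)
    have hyB : f (fun i => (p i).2) ∈ B := by
      rw [hB]
      exact mem_image_of_mem _ (by simp only [Fintype.mem_piFinset]; exact hp2)
    have hne : f (fun i => (p i).1) ≠ f (fun i => (p i).2) := by
      intro h
      have heq := digits_inj m hm n (fun i => (p i).1) (fun i => (p i).2)
        (fun i => (hAbound _ (hp1 i)).1) (fun i => (hAbound _ (hp1 i)).2)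
        (fun i => (hAbound _ (hp2 i)).1) (fun i => (hAbound _ (hp2 i)).2) h
      exact hp3 ⟨0, hn⟩ (congrFun heq ⟨0, hn⟩)
    have hsumeq : f (fun i => (p i).1) + f (fun i => (p i).2) = f s := by
      simp only [hf, ← Finset.sum_add_distrib]
      apply Finset.sum_congr rfl
      intro i _
      rw [← add_mul, hp4]
    rw [← hsumeq]
    simp only [rsum, mem_image]
    refine ⟨(f (fun i => (p i).1), f (fun i => (p i).2)), ?_, rfl⟩
    simp only [mem_filter, mem_product]
    exact ⟨⟨hxB, hyB⟩, hne⟩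
  have hinj : Set.InjOn f (Fintype.piFinset fun _ : Fin n => rsum A) := by
    intro s hs t ht h
    exact digits_inj m hm n s t
      (fun i => (hrbound _ (by exact (Fintype.mem_piFinset.mp hs) i)).1)
      (fun i => (hrbound _ ((Fintype.mem_piFinset.mp hs) i)).2)
      (fun i => (hrbound _ ((Fintype.mem_piFinset.mp ht) i)).1)
      (fun i => (hrbound _ ((Fintype.mem_piFinset.mp ht) i)).2) h
  calc (rsum B).card ≥ ((Fintype.piFinset fun _ : Fin n => rsum A).image f).card :=
        card_le_card key
    _ = (Fintype.piFinset fun _ : Fin n => rsum A).card := card_image_of_injOn hinj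
    _ = (rsum A).card ^ n := by
        rw [Fintype.card_piFinset]
        simp
end

section
/- Let A be a nonempty finite set of nonnegative integers with maximum a*, and let m be a positive integer with m > 2a*. For a positive integer n, define B := {∑_{i=0}^{n-1} a_i m^i : a_i ∈ A for all i}. Then |B - B| = |A - A|^n. -/
open Finset
open scoped Pointwise

lemma digits_zero (m : ℤ) (hm : 0 < m) :
    ∀ (n : ℕ) (c : Fin n → ℤ), (∀ i, |c i| < m) →
      ∑ i, c i * m ^ (i : ℕ) = 0 → ∀ i, c i = 0 := by
  intro n
  induction n with
  | zero => intro c _ _ i; exact i.elim0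
  | succ n ih =>
    intro c hb hsum
    have hrw : ∑ i : Fin n, c i.succ * m ^ ((i:ℕ)+1)
        = (∑ i : Fin n, c i.succ * m ^ (i:ℕ)) * m := by
      rw [Finset.sum_mul]
      exact Finset.sum_congr rfl fun i _ => by ring
    rw [Fin.sum_univ_succ] at hsum
    simp only [Fin.val_succ, Fin.val_zero, pow_zero, mul_one] at hsum
    rw [hrw] at hsum
    have hdvd : m ∣ c 0 := ⟨-(∑ i : Fin n, c i.succ * m ^ (i:ℕ)), by linarith [hsum]⟩
    have hc0 : c 0 = 0 := Int.eq_zero_of_abs_lt_dvd hdvd (hb 0)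
    have hS : ∑ i : Fin n, c i.succ * m ^ (i:ℕ) = 0 := by
      have : (∑ i : Fin n, c i.succ * m ^ (i:ℕ)) * m = 0 := by linarith
      exact (mul_eq_zero.mp this).resolve_right (by omega)
    have hrest := ih (fun i => c i.succ) (fun i => hb i.succ) hS
    intro i
    refine Fin.cases hc0 (fun j => hrest j) i

theorem stmt11 (A : Finset ℤ) (hA : A.Nonempty) (hpos : ∀ a ∈ A, 0 ≤ a)
    (m : ℤ) (hm : 0 < m) (hm2 : m > 2 * A.max' hA)
    (n : ℕ) (hn : 0 < n)
    (B : Finset ℤ)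
    (hB : B = (Fintype.piFinset fun _ : Fin n => A).image
        fun f => ∑ i : Fin n, f i * m ^ (i : ℕ)) :
    (B - B).card = (A - A).card ^ n := by
  subst hB
  set a := A.max' hA with ha
  have habs : ∀ x ∈ A - A, |x| ≤ a := by
    intro x hx
    rw [Finset.mem_sub] at hx
    obtain ⟨u, hu, v, hv, rfl⟩ := hx
    have h1 := hpos u hu
    have h2 := hpos v hv
    have h3 := A.le_max' u hu
    have h4 := A.le_max' v hv
    rw [abs_le]; constructor <;> omega
  have key : ((Fintype.piFinset fun _ : Fin n => A).image
        fun f => ∑ i : Fin n, f i * m ^ (i : ℕ))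
      - ((Fintype.piFinset fun _ : Fin n => A).image
        fun f => ∑ i : Fin n, f i * m ^ (i : ℕ))
      = (Fintype.piFinset fun _ : Fin n => A - A).image
        fun f => ∑ i : Fin n, f i * m ^ (i : ℕ) := by
    ext x
    constructor
    · intro hx
      rw [Finset.mem_sub] at hx
      obtain ⟨y, hy, z, hz, rfl⟩ := hx
      simp only [Finset.mem_image] at hy hz ⊢
      obtain ⟨f, hf, rfl⟩ := hy
      obtain ⟨g, hg, rfl⟩ := hz
      refine ⟨fun i => f i - g i, ?_, ?_⟩
      · rw [Fintype.mem_piFinset]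
        intro i
        exact Finset.sub_mem_sub (Fintype.mem_piFinset.mp hf i)
          (Fintype.mem_piFinset.mp hg i)
      · rw [← Finset.sum_sub_distrib]
        exact Finset.sum_congr rfl fun i _ => by ring
    · intro hx
      simp only [Finset.mem_image] at hx
      obtain ⟨d, hd, rfl⟩ := hx
      have hch : ∀ i, ∃ u ∈ A, ∃ v ∈ A, u - v = d i := fun i =>
        Finset.mem_sub.mp (Fintype.mem_piFinset.mp hd i)
      choose f hf g hg hfg using hch
      rw [Finset.mem_sub]
      refine ⟨∑ i : Fin n, f i * m ^ (i:ℕ), ?_, ∑ i : Fin n, g i * m ^ (i:ℕ), ?_, ?_⟩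
      · exact Finset.mem_image_of_mem _ (Fintype.mem_piFinset.mpr hf)
      · exact Finset.mem_image_of_mem _ (Fintype.mem_piFinset.mpr hg)
      · rw [← Finset.sum_sub_distrib]
        refine Finset.sum_congr rfl fun i _ => by rw [← hfg i]; ring
  rw [key]
  rw [Finset.card_image_of_injOn]
  · rw [Fintype.card_piFinset]
    simp
  · intro d hd e he hde
    have hzero : ∀ i, d i - e i = 0 := by
      apply digits_zero m hm n (fun i => d i - e i)
      · intro i
        show |d i - e i| < m
        have h1 := habs _ (Fintype.mem_piFinset.mp (Finset.mem_coe.mp hd) i)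
        have h2 := habs _ (Fintype.mem_piFinset.mp (Finset.mem_coe.mp he) i)
        calc |d i - e i| ≤ |d i| + |e i| := abs_sub _ _
          _ < m := by linarith
      · show ∑ i : Fin n, (d i - e i) * m ^ (i:ℕ) = 0
        have h : ∑ i : Fin n, (d i - e i) * m ^ (i:ℕ)
            = (∑ i : Fin n, d i * m ^ (i:ℕ)) - ∑ i : Fin n, e i * m ^ (i:ℕ) := by
          rw [← Finset.sum_sub_distrib]
          exact Finset.sum_congr rfl fun i _ => by ring
        simp only at hde
        rw [h, hde, sub_self]
    funext i
    exact sub_eq_zero.mp (hzero i)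
end

section
/- For every integer x ≤ -2, the set A_x = {0, 1, ..., -x - 1} ∪ {-2x - 2} satisfies A_x ∔ A_x = [1, -3x - 3] (the integer interval) and A_x - A_x = [2x + 2, -2x - 2], and hence |A_x - A_x| - |A_x ∔ A_x| = -x. -/
open Finset
open scoped Pointwise

theorem stmt13 (x : ℤ) (hx : x ≤ -2)
    (A : Finset ℤ) (hA : A = Finset.Icc 0 (-x - 1) ∪ {-2 * x - 2}) :
    rsum A = Finset.Icc 1 (-3 * x - 3) ∧
    A - A = Finset.Icc (2 * x + 2) (-2 * x - 2) ∧
    ((A - A).card : ℤ) - (rsum A).card = -x := by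
  subst hA
  have hmem : ∀ a : ℤ, a ∈ Finset.Icc 0 (-x - 1) ∪ {-2 * x - 2} ↔
      (0 ≤ a ∧ a ≤ -x - 1) ∨ a = -2 * x - 2 := by
    intro a; simp [Finset.mem_union, Finset.mem_Icc]; exact Or.comm
  have h1 : rsum (Finset.Icc 0 (-x - 1) ∪ {-2 * x - 2}) = Finset.Icc 1 (-3 * x - 3) := by
    ext k
    simp only [rsum, Finset.mem_image, Finset.mem_filter, Finset.mem_product, Finset.mem_Icc]
    constructor
    · rintro ⟨⟨a, b⟩, ⟨⟨ha, hb⟩, hab⟩, rfl⟩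
      rw [hmem] at ha hb
      simp only at hab ⊢
      rcases ha with ha | ha <;> rcases hb with hb | hb <;> omega
    · intro hk
      by_cases h2 : k ≤ -x - 1
      · exact ⟨(0, k), ⟨⟨(hmem 0).2 (by omega), (hmem k).2 (by omega)⟩, by simp; omega⟩,
          by simp⟩
      by_cases h : k ≤ -2 * x - 3
      · exact ⟨(-x - 1, k - (-x - 1)), ⟨⟨(hmem _).2 (by omega), (hmem _).2 (by omega)⟩,
          by simp; omega⟩, by simp⟩
      · exact ⟨(-2 * x - 2, k - (-2 * x - 2)), ⟨⟨(hmem _).2 (by omega), (hmem _).2 (by omega)⟩,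
          by simp; omega⟩, by simp⟩
  have h2 : Finset.Icc 0 (-x - 1) ∪ {-2 * x - 2} - (Finset.Icc 0 (-x - 1) ∪ {-2 * x - 2}) =
      Finset.Icc (2 * x + 2) (-2 * x - 2) := by
    ext k
    simp only [Finset.mem_sub, Finset.mem_Icc]
    constructor
    · rintro ⟨a, ha, b, hb, rfl⟩
      rw [hmem] at ha hb
      rcases ha with ha | ha <;> rcases hb with hb | hb <;> omega
    · intro hk
      by_cases hc1 : -x - 1 ≤ k
      · exact ⟨-2 * x - 2, (hmem _).2 (by omega), -2 * x - 2 - k, (hmem _).2 (by omega),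
          by ring⟩
      by_cases hc2 : k ≤ x + 1
      · exact ⟨k + (-2 * x - 2), (hmem _).2 (by omega), -2 * x - 2, (hmem _).2 (by omega),
          by ring⟩
      by_cases hc3 : 0 ≤ k
      · exact ⟨k, (hmem _).2 (by omega), 0, (hmem _).2 (by omega), by ring⟩
      · exact ⟨0, (hmem _).2 (by omega), -k, (hmem _).2 (by omega), by ring⟩
  refine ⟨h1, h2, ?_⟩
  rw [h1, h2, Int.card_Icc, Int.card_Icc]
  omega
end

section
/- For every integer x, there exists a nonempty finite set A ⊆ ℤ such that |A - A| - |A ∔ A| = -x. In particular, the map A ↦ |A ∔ A| - |A - A| on nonempty finite subsets of ℤ is surjective onto ℤ. -/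
set_option maxRecDepth 20000


open Finset
open scoped Pointwise

lemma mem_rsum {A : Finset ℤ} {x : ℤ} :
    x ∈ rsum A ↔ ∃ a ∈ A, ∃ b ∈ A, a ≠ b ∧ a + b = x := by
  simp only [rsum, mem_image, mem_filter, mem_product, Prod.exists]
  constructor
  · rintro ⟨a, b, ⟨⟨ha, hb⟩, hne⟩, hx⟩
    exact ⟨a, ha, b, hb, hne, hx⟩
  · rintro ⟨a, ha, b, hb, hne, hx⟩
    exact ⟨a, b, ⟨⟨ha, hb⟩, hne⟩, hx⟩

lemma master (S : Finset ℤ) (hSne : S.Nonempty) (W T : ℤ)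
    (hS : ∀ s ∈ S, 0 ≤ s ∧ s ≤ W) (hT : 4 * W + 1 ≤ T)
    (j : ℕ) (hj : 2 ≤ j) :
    ∃ A : Finset ℤ, A.Nonempty ∧
      ((A - A).card : ℤ) - (rsum A).card =
        (2 * (j : ℤ) - 1) * (S - S).card -
          ((2 * (j : ℤ) - 3) * (S + S).card + 2 * (rsum S).card) := by
  have hW0 : 0 ≤ W := by
    obtain ⟨s, hs⟩ := hSne
    have := hS s hs; omega
  have hT0 : 0 < T := by omega
  set f : ℤ × ℤ → ℤ := fun p => p.1 * T + p.2 with hf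
  -- key injectivity
  have hinj : ∀ k σ k' σ' : ℤ, -2*W ≤ σ → σ ≤ 2*W → -2*W ≤ σ' → σ' ≤ 2*W →
      k * T + σ = k' * T + σ' → k = k' ∧ σ = σ' := by
    intro k σ k' σ' h1 h2 h3 h4 heq
    have hkk : (k - k') * T = σ' - σ := by linear_combination heq
    rcases lt_trichotomy k k' with h | h | h
    · have h5 : k - k' ≤ -1 := by omega
      have h6 : (k - k') * T ≤ -T := by nlinarith
      constructor <;> linarith
    · subst h
      exact ⟨rfl, by linarith [heq]⟩
    · have h5 : (1:ℤ) ≤ k - k' := by omega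
      have h6 : T ≤ (k - k') * T := by nlinarith
      constructor <;> linarith
  set A : Finset ℤ := (range j).biUnion (fun i => S.image (fun s => (i:ℤ) * T + s)) with hA
  have hmemA : ∀ x : ℤ, x ∈ A ↔ ∃ i : ℕ, i < j ∧ ∃ s ∈ S, (i:ℤ) * T + s = x := by
    intro x
    rw [hA, mem_biUnion]
    constructor
    · rintro ⟨i, hi, hx⟩
      obtain ⟨s, hs, hsx⟩ := mem_image.mp hx
      exact ⟨i, mem_range.mp hi, s, hs, hsx⟩
    · rintro ⟨i, hi, s, hs, hx⟩
      exact ⟨i, mem_range.mpr hi, mem_image.mpr ⟨s, hs, hx⟩⟩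
  have hAne : A.Nonempty := by
    obtain ⟨s, hs⟩ := hSne
    exact ⟨(0:ℤ) * T + s, (hmemA _).2 ⟨0, by omega, s, hs, by push_cast; ring⟩⟩
  -- bounds on difference and sum sets
  have hDb : ∀ δ ∈ S - S, -2*W ≤ δ ∧ δ ≤ 2*W := by
    intro δ hδ
    obtain ⟨a, ha, b, hb, rfl⟩ := mem_sub.mp hδ
    have := hS a ha; have := hS b hb; omega
  have hSb : ∀ σ ∈ S + S, -2*W ≤ σ ∧ σ ≤ 2*W := by
    intro σ hσ
    obtain ⟨a, ha, b, hb, rfl⟩ := mem_add.mp hσ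
    have := hS a ha; have := hS b hb; omega
  have hrs_sub : rsum S ⊆ S + S := by
    intro σ hσ
    obtain ⟨a, ha, b, hb, _, rfl⟩ := mem_rsum.mp hσ
    exact add_mem_add ha hb
  -- difference set
  have hD : A - A = ((Icc (1 - (j:ℤ)) ((j:ℤ) - 1)) ×ˢ (S - S)).image f := by
    ext x
    constructor
    · intro hx
      obtain ⟨a, ha, b, hb, rfl⟩ := mem_sub.mp hx
      obtain ⟨i, hi, s, hs, rfl⟩ := (hmemA a).mp ha
      obtain ⟨i', hi', s', hs', rfl⟩ := (hmemA b).mp hb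
      refine mem_image.mpr ⟨((i:ℤ) - i', s - s'), mem_product.mpr ⟨?_, sub_mem_sub hs hs'⟩, ?_⟩
      · rw [mem_Icc]; omega
      · simp only [hf]; ring
    · intro hx
      obtain ⟨⟨k, δ⟩, hmem, rfl⟩ := mem_image.mp hx
      obtain ⟨hk, hδ⟩ := mem_product.mp hmem
      rw [mem_Icc] at hk
      obtain ⟨s, hs, s', hs', rfl⟩ := mem_sub.mp hδ
      refine mem_sub.mpr ⟨(k.toNat : ℤ) * T + s, (hmemA _).2 ⟨k.toNat, by omega, s, hs, rfl⟩,
        ((-k).toNat : ℤ) * T + s', (hmemA _).2 ⟨(-k).toNat, by omega, s', hs', rfl⟩, ?_⟩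
      have h1 : (k.toNat : ℤ) - ((-k).toNat : ℤ) = k := by omega
      simp only [hf]
      linear_combination T * h1
  have hDcard : ((A - A).card : ℤ) = (2 * (j:ℤ) - 1) * (S - S).card := by
    rw [hD, card_image_of_injOn, card_product]
    · rw [Int.card_Icc]
      have h9 : ((((j:ℤ) - 1) + 1 - (1 - (j:ℤ))).toNat : ℤ) = 2*(j:ℤ)-1 := by omega
      push_cast
      rw [h9]
    · intro p hp p' hp' heq
      simp only [coe_product, Set.mem_prod, mem_coe] at hp hp'
      have h1 := hDb _ hp.2
      have h2 := hDb _ hp'.2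
      have := hinj p.1 p.2 p'.1 p'.2 h1.1 h1.2 h2.1 h2.2 heq
      exact Prod.ext this.1 this.2
  -- restricted sumset
  have hjz : (2:ℤ) ≤ (j:ℤ) := by exact_mod_cast hj
  set D1 : Finset (ℤ × ℤ) := ({0, 2*(j:ℤ)-2} : Finset ℤ) ×ˢ rsum S with hD1
  set D2 : Finset (ℤ × ℤ) := (Icc (1:ℤ) (2*(j:ℤ)-3)) ×ˢ (S + S) with hD2
  have hR : rsum A = (D1 ∪ D2).image f := by
    ext x
    constructor
    · intro hx
      obtain ⟨a, ha, b, hb, hne, rfl⟩ := mem_rsum.mp hx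
      obtain ⟨i, hi, s, hs, rfl⟩ := (hmemA a).mp ha
      obtain ⟨i', hi', s', hs', rfl⟩ := (hmemA b).mp hb
      by_cases hii : i = i'
      · subst hii
        have hss : s ≠ s' := by
          intro h; subst h; exact hne rfl
        have hσ : s + s' ∈ rsum S := mem_rsum.mpr ⟨s, hs, s', hs', hss, rfl⟩
        by_cases h0 : i = 0
        · subst h0
          refine mem_image.mpr ⟨(0, s + s'), mem_union_left _ (mem_product.mpr ⟨by simp, hσ⟩), ?_⟩
          simp only [hf]; push_cast; ring
        · by_cases hlast : i = j - 1
          · refine mem_image.mpr ⟨(2*(j:ℤ)-2, s + s'),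
              mem_union_left _ (mem_product.mpr ⟨by simp, hσ⟩), ?_⟩
            simp only [hf]
            have : (i:ℤ) = (j:ℤ) - 1 := by omega
            rw [this]; ring
          · refine mem_image.mpr ⟨(2*(i:ℤ), s + s'),
              mem_union_right _ (mem_product.mpr ⟨?_, hrs_sub hσ⟩), ?_⟩
            · rw [mem_Icc]; omega
            · simp only [hf]; ring
      · refine mem_image.mpr ⟨((i:ℤ) + i', s + s'),
          mem_union_right _ (mem_product.mpr ⟨?_, add_mem_add hs hs'⟩), ?_⟩
        · rw [mem_Icc]; omega
        · simp only [hf]; ring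
    · intro hx
      obtain ⟨⟨k, σ⟩, hmem, rfl⟩ := mem_image.mp hx
      rcases mem_union.mp hmem with h | h
      · obtain ⟨hk, hσ⟩ := mem_product.mp h
        obtain ⟨s, hs, s', hs', hss, rfl⟩ := mem_rsum.mp hσ
        simp only [mem_insert, mem_singleton] at hk
        rcases hk with rfl | rfl
        · refine mem_rsum.mpr ⟨(0:ℤ) * T + s, (hmemA _).2 ⟨0, by omega, s, hs, by push_cast; ring⟩,
            (0:ℤ) * T + s', (hmemA _).2 ⟨0, by omega, s', hs', by push_cast; ring⟩, ?_, ?_⟩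
          · intro h; apply hss; linear_combination h
          · simp only [hf]; ring
        · refine mem_rsum.mpr ⟨((j:ℤ)-1) * T + s, (hmemA _).2 ⟨j-1, by omega, s, hs, ?_⟩,
            ((j:ℤ)-1) * T + s', (hmemA _).2 ⟨j-1, by omega, s', hs', ?_⟩, ?_, ?_⟩
          · push_cast [Nat.cast_sub (by omega : 1 ≤ j)]; ring
          · push_cast [Nat.cast_sub (by omega : 1 ≤ j)]; ring
          · intro h; apply hss; linear_combination h
          · simp only [hf]; ring
      · obtain ⟨hk, hσ⟩ := mem_product.mp h
        rw [mem_Icc] at hk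
        obtain ⟨s, hs, s', hs', rfl⟩ := mem_add.mp hσ
        have hex : ∃ i1 i2 : ℕ, i1 < j ∧ i2 < j ∧ i1 ≠ i2 ∧ (i1:ℤ) + i2 = k := by
          by_cases hkj : k ≤ (j:ℤ) - 1
          · exact ⟨k.toNat, 0, by omega, by omega, by omega, by omega⟩
          · exact ⟨(k - ((j:ℤ)-1)).toNat, j - 1, by omega, by omega, by omega, by omega⟩
        obtain ⟨i1, i2, hi1, hi2, hne12, hsum⟩ := hex
        refine mem_rsum.mpr ⟨(i1:ℤ) * T + s, (hmemA _).2 ⟨i1, hi1, s, hs, rfl⟩,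
          (i2:ℤ) * T + s', (hmemA _).2 ⟨i2, hi2, s', hs', rfl⟩, ?_, ?_⟩
        · intro heq
          have h1 := hS s hs
          have h2 := hS s' hs'
          have := hinj (i1:ℤ) s (i2:ℤ) s' (by omega) (by omega) (by omega) (by omega) heq
          have : i1 = i2 := by exact_mod_cast this.1
          exact hne12 this
        · simp only [hf]; linear_combination T * hsum
  have hdisj : Disjoint D1 D2 := by
    rw [disjoint_left]
    intro p hp hp'
    obtain ⟨hk, -⟩ := mem_product.mp hp
    obtain ⟨hk', -⟩ := mem_product.mp hp'
    simp only [mem_insert, mem_singleton] at hk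
    rw [mem_Icc] at hk'
    rcases hk with h | h <;> omega
  have hRcard : ((rsum A).card : ℤ) = (2 * (j:ℤ) - 3) * (S + S).card + 2 * (rsum S).card := by
    rw [hR, card_image_of_injOn, card_union_of_disjoint hdisj, card_product, card_product]
    · have hc1 : ({0, 2*(j:ℤ)-2} : Finset ℤ).card = 2 := by
        rw [card_insert_of_notMem (by simp; omega), card_singleton]
      have hc2 : (Icc (1:ℤ) (2*(j:ℤ)-3)).card = (2*(j:ℤ)-3).toNat := by
        rw [Int.card_Icc]; congr 1; omega
      rw [hc1, hc2]
      push_cast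
      have : ((2*(j:ℤ)-3).toNat : ℤ) = 2*(j:ℤ)-3 := by omega
      rw [this]; ring
    · intro p hp p' hp' heq
      have hb : ∀ q ∈ D1 ∪ D2, -2*W ≤ q.2 ∧ q.2 ≤ 2*W := by
        intro q hq
        rcases mem_union.mp hq with h | h
        · exact hSb _ (hrs_sub (mem_product.mp h).2)
        · exact hSb _ (mem_product.mp h).2
      simp only [mem_coe] at hp hp'
      have h1 := hb _ hp
      have h2 := hb _ hp'
      have := hinj p.1 p.2 p'.1 p'.2 h1.1 h1.2 h2.1 h2.2 heq
      exact Prod.ext this.1 this.2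
  exact ⟨A, hAne, by rw [hDcard, hRcard]⟩

lemma fam (S : Finset ℤ) (hSne : S.Nonempty) (W : ℤ)
    (hS : ∀ s ∈ S, 0 ≤ s ∧ s ≤ W) (hW : 4 * W + 1 ≤ 1000)
    (p q r : ℕ) (hp : (S - S).card = p) (hq : (S + S).card = q) (hr : (rsum S).card = r)
    (j : ℕ) (hj : 2 ≤ j) :
    ∃ A : Finset ℤ, A.Nonempty ∧
      ((A - A).card : ℤ) - (rsum A).card =
        (2 * (j:ℤ) - 1) * p - ((2 * (j:ℤ) - 3) * q + 2 * r) := by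
  obtain ⟨A, hA, hc⟩ := master S hSne W 1000 hS hW j hj
  exact ⟨A, hA, by rw [hc, hp, hq, hr]⟩

theorem stmt16 (x : ℤ) :
    ∃ A : Finset ℤ, A.Nonempty ∧ ((A - A).card : ℤ) - (rsum A).card = -x := by
  by_cases h2 : (-x) % 2 = 1
  · by_cases h9 : 9 ≤ -x
    · -- d = 2j + 5, odd ≥ 9
      obtain ⟨A, hA, hc⟩ := fam {0,1,3} ⟨0, by decide⟩ 3 (by decide) (by norm_num)
        7 6 3 (by decide) (by decide) (by decide) ((-x-5)/2).toNat (by omega)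
      refine ⟨A, hA, ?_⟩
      rw [hc]; push_cast; omega
    · -- d = -2j + 11, odd ≤ 7
      obtain ⟨A, hA, hc⟩ := fam {0,2,3,4,7,11,12,14} ⟨0, by decide⟩ 14 (by decide) (by norm_num)
        25 26 21 (by decide) (by decide) (by decide) ((11+x)/2).toNat (by omega)
      refine ⟨A, hA, ?_⟩
      rw [hc]; push_cast; omega
  · by_cases h4 : (-x) % 4 = 0
    · by_cases h12 : 12 ≤ -x
      · -- d = 4j + 4, ≡0 mod 4, ≥ 12
        obtain ⟨A, hA, hc⟩ := fam {0,1,2,5} ⟨0, by decide⟩ 5 (by decide) (by norm_num)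
          11 9 6 (by decide) (by decide) (by decide) ((-x-4)/4).toNat (by omega)
        refine ⟨A, hA, ?_⟩
        rw [hc]; push_cast; omega
      · by_cases h8 : -x = 8
        · refine ⟨{0,1,2,3,4,5,12}, ⟨0, by decide⟩, ?_⟩
          rw [show -x = (8:ℤ) from h8]
          decide
        · -- d = -4j + 12, ≡0 mod 4, ≤ 4
          obtain ⟨A, hA, hc⟩ := fam {0,1,2,4,5,9,12,13,14,16,17} ⟨0, by decide⟩ 17
            (by decide) (by norm_num)
            33 35 30 (by decide) (by decide) (by decide) ((12+x)/4).toNat (by omega)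
          refine ⟨A, hA, ?_⟩
          rw [hc]; push_cast; omega
    · by_cases h10 : 10 ≤ -x
      · -- d = 4j + 2, ≡2 mod 4, ≥ 10
        obtain ⟨A, hA, hc⟩ := fam {0,1,2,3,6} ⟨0, by decide⟩ 6 (by decide) (by norm_num)
          13 11 9 (by decide) (by decide) (by decide) ((-x-2)/4).toNat (by omega)
        refine ⟨A, hA, ?_⟩
        rw [hc]; push_cast; omega
      · -- d = -4j + 14, ≡2 mod 4, ≤ 6
        obtain ⟨A, hA, hc⟩ := fam {0,1,2,4,5,12,15,16,17,19,20} ⟨0, by decide⟩ 20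
          (by decide) (by norm_num)
          37 39 33 (by decide) (by decide) (by decide) ((14+x)/4).toNat (by omega)
        refine ⟨A, hA, ?_⟩
        rw [hc]; push_cast; omega
end

section
/- There exist infinitely many restricted-sum-dominant sets of integers; indeed, for each positive integer x there is a finite set A_x ⊆ ℤ with |A_x ∔ A_x| - |A_x - A_x| = x, and these sets are pairwise distinct. -/
open Finset
open scoped Pointwise

namespace Stmt17Aux

lemma mem_rsum {A : Finset ℤ} {x : ℤ} :
    x ∈ rsum A ↔ ∃ a ∈ A, ∃ b ∈ A, a ≠ b ∧ a + b = x := by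
  simp only [rsum, Finset.mem_image, Finset.mem_filter, Finset.mem_product, Prod.exists]
  constructor
  · rintro ⟨a, b, ⟨⟨ha, hb⟩, hne⟩, rfl⟩
    exact ⟨a, ha, b, hb, hne, rfl⟩
  · rintro ⟨a, ha, b, hb, hne, rfl⟩
    exact ⟨a, b, ⟨⟨ha, hb⟩, hne⟩, rfl⟩

/-- The base MSTD set. -/
def B : Finset ℤ := {0, 2, 3, 4, 7, 11, 12, 14}

/-- `mix M A = A + M • B` as an image. -/
def mix (M : ℤ) (A : Finset ℤ) : Finset ℤ :=
  (A ×ˢ B).image fun p => p.1 + M * p.2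

lemma mem_mix {M : ℤ} {A : Finset ℤ} {x : ℤ} :
    x ∈ mix M A ↔ ∃ a ∈ A, ∃ b ∈ B, a + M * b = x := by
  simp only [mix, Finset.mem_image, Finset.mem_product, Prod.exists]
  constructor
  · rintro ⟨a, b, ⟨ha, hb⟩, rfl⟩; exact ⟨a, ha, b, hb, rfl⟩
  · rintro ⟨a, ha, b, hb, rfl⟩; exact ⟨a, b, ⟨ha, hb⟩, rfl⟩

lemma inj_aux {M s s' b b' : ℤ} (h0 : 0 ≤ s) (h1 : s < M) (h0' : 0 ≤ s') (h1' : s' < M)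
    (h : s + M * b = s' + M * b') : s = s' ∧ b = b' := by
  by_cases hb : b = b'
  · subst hb
    constructor
    · linarith
    · rfl
  · exfalso
    have h2 : M * (b - b') = s' - s := by linear_combination h
    have h3 : (1 : ℤ) ≤ |b - b'| := Int.one_le_abs (sub_ne_zero.mpr hb)
    have hM : (0 : ℤ) < M := lt_of_le_of_lt h0 h1
    have h5 : M ≤ |s' - s| := by
      rw [← h2, abs_mul, abs_of_nonneg hM.le]
      nlinarith
    have h6 : |s' - s| < M := abs_sub_lt_iff.mpr ⟨by linarith, by linarith⟩
    linarith

lemma mix_sub (M : ℤ) (A : Finset ℤ) :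
    mix M A - mix M A = ((A - A) ×ˢ (B - B)).image fun p => p.1 + M * p.2 := by
  ext x
  simp only [Finset.mem_sub, Finset.mem_image, Finset.mem_product, Prod.exists, mem_mix]
  constructor
  · rintro ⟨c, ⟨a, ha, b, hb, rfl⟩, c', ⟨a', ha', b', hb', rfl⟩, rfl⟩
    exact ⟨a - a', b - b', ⟨⟨a, ha, a', ha', rfl⟩, ⟨b, hb, b', hb', rfl⟩⟩, by ring⟩
  · rintro ⟨s, t, ⟨⟨a, ha, a', ha', rfl⟩, ⟨b, hb, b', hb', rfl⟩⟩, rfl⟩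
    exact ⟨a + M * b, ⟨a, ha, b, hb, rfl⟩, a' + M * b', ⟨a', ha', b', hb', rfl⟩, by ring⟩

lemma card_mix_sub {M N : ℤ} (A : Finset ℤ) (hA : ∀ a ∈ A, 0 ≤ a ∧ a ≤ N)
    (hM : 2 * N < M) :
    (mix M A - mix M A).card = (A - A).card * (B - B).card := by
  rw [mix_sub, ← Finset.card_product]
  apply Finset.card_image_of_injOn
  rintro ⟨s, t⟩ hs ⟨s', t'⟩ hs' h
  simp only [Finset.mem_coe, Finset.mem_product, Finset.mem_sub] at hs hs'
  obtain ⟨⟨a, ha, a', ha', rfl⟩, -⟩ := hs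
  obtain ⟨⟨c, hc, c', hc', rfl⟩, -⟩ := hs'
  obtain ⟨h1, h2⟩ := hA a ha
  obtain ⟨h3, h4⟩ := hA a' ha'
  obtain ⟨h5, h6⟩ := hA c hc
  obtain ⟨h7, h8⟩ := hA c' hc'
  simp only at h
  have key : (a - a' + N) + M * t = (c - c' + N) + M * t' := by linarith
  obtain ⟨e1, e2⟩ := inj_aux (by linarith) (by linarith) (by linarith) (by linarith) key
  have : a - a' = c - c' := by linarith
  simp [this, e2]

lemma rsum_mix {M N : ℤ} (A : Finset ℤ) (hA : ∀ a ∈ A, 0 ≤ a ∧ a ≤ N)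
    (hM : 2 * N < M) :
    rsum (mix M A) =
      (((A + A) ×ˢ rsum B) ∪ (rsum A ×ˢ ((B + B) \ rsum B))).image
        fun p => p.1 + M * p.2 := by
  have hbd : ∀ a ∈ A, 0 ≤ a ∧ a ≤ N := hA
  ext x
  rw [mem_rsum]
  simp only [Finset.mem_image, Finset.mem_union, Finset.mem_product, Finset.mem_sdiff,
    Finset.mem_add, Prod.exists, mem_mix]
  constructor
  · rintro ⟨c, ⟨a, ha, b, hb, rfl⟩, c', ⟨a', ha', b', hb', rfl⟩, hne, rfl⟩
    by_cases hbb : b = b'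
    · subst hbb
      have haa : a ≠ a' := by
        intro h; exact hne (by rw [h])
      by_cases ht : b + b ∈ rsum B
      · exact ⟨a + a', b + b, Or.inl ⟨⟨a, ha, a', ha', rfl⟩, ht⟩, by ring⟩
      · exact ⟨a + a', b + b, Or.inr ⟨mem_rsum.mpr ⟨a, ha, a', ha', haa, rfl⟩,
          ⟨b, hb, b, hb, rfl⟩, ht⟩, by ring⟩
    · exact ⟨a + a', b + b', Or.inl ⟨⟨a, ha, a', ha', rfl⟩,
        mem_rsum.mpr ⟨b, hb, b', hb', hbb, rfl⟩⟩, by ring⟩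
  · rintro ⟨s, t, hst, rfl⟩
    rcases hst with ⟨⟨a, ha, a', ha', rfl⟩, ht⟩ | ⟨hsA, ⟨b, hb, b', hb', rfl⟩, -⟩
    · obtain ⟨b, hb, b', hb', hbb, rfl⟩ := mem_rsum.mp ht
      refine ⟨a + M * b, ⟨a, ha, b, hb, rfl⟩, a' + M * b', ⟨a', ha', b', hb', rfl⟩, ?_, by ring⟩
      intro h
      obtain ⟨h1, h2⟩ := hbd a ha
      obtain ⟨h3, h4⟩ := hbd a' ha'
      exact hbb (inj_aux h1 (by linarith) h3 (by linarith) h).2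
    · obtain ⟨a, ha, a', ha', haa, rfl⟩ := mem_rsum.mp hsA
      refine ⟨a + M * b, ⟨a, ha, b, hb, rfl⟩, a' + M * b', ⟨a', ha', b', hb', rfl⟩, ?_, by ring⟩
      intro h
      obtain ⟨h1, h2⟩ := hbd a ha
      obtain ⟨h3, h4⟩ := hbd a' ha'
      exact haa (inj_aux h1 (by linarith) h3 (by linarith) h).1

lemma card_rsum_mix {M N : ℤ} (A : Finset ℤ) (hA : ∀ a ∈ A, 0 ≤ a ∧ a ≤ N)
    (hM : 2 * N < M) :
    (rsum (mix M A)).card =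
      (A + A).card * (rsum B).card + (rsum A).card * ((B + B) \ rsum B).card := by
  rw [rsum_mix A hA hM]
  have hrs : rsum A ⊆ A + A := by
    intro x hx
    obtain ⟨a, ha, b, hb, -, rfl⟩ := mem_rsum.mp hx
    exact Finset.add_mem_add ha hb
  have hsumbd : ∀ s ∈ A + A, 0 ≤ s ∧ s ≤ 2 * N := by
    intro s hs
    obtain ⟨a, ha, a', ha', rfl⟩ := Finset.mem_add.mp hs
    obtain ⟨h1, h2⟩ := hA a ha
    obtain ⟨h3, h4⟩ := hA a' ha'
    constructor <;> linarith
  rw [Finset.card_image_of_injOn, Finset.card_union_of_disjoint, Finset.card_product,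
    Finset.card_product]
  · rw [Finset.disjoint_left]
    rintro ⟨s, t⟩ h1 h2
    rw [Finset.mem_product] at h1 h2
    exact (Finset.mem_sdiff.mp h2.2).2 h1.2
  · rintro ⟨s, t⟩ hs ⟨s', t'⟩ hs' h
    simp only [Finset.mem_coe, Finset.mem_union, Finset.mem_product, Finset.mem_sdiff] at hs hs'
    have hsbd : 0 ≤ s ∧ s ≤ 2 * N := by
      rcases hs with ⟨h1, -⟩ | ⟨h1, -⟩
      · exact hsumbd s h1
      · exact hsumbd s (hrs h1)
    have hsbd' : 0 ≤ s' ∧ s' ≤ 2 * N := by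
      rcases hs' with ⟨h1, -⟩ | ⟨h1, -⟩
      · exact hsumbd s' h1
      · exact hsumbd s' (hrs h1)
    simp only at h
    obtain ⟨e1, e2⟩ := inj_aux hsbd.1 (by linarith [hsbd.2]) hsbd'.1 (by linarith [hsbd'.2]) h
    simp [e1, e2]

-- facts about B, by decide
lemma card_rsum_B : (rsum B).card = 21 := by decide
lemma card_sdiff_B : ((B + B) \ rsum B).card = 5 := by decide
lemma card_sub_B : (B - B).card = 25 := by decide

-- Interval families
lemma Icc_add_Icc' (n : ℤ) (hn : 0 ≤ n) : Icc (0:ℤ) n + Icc (0:ℤ) n = Icc 0 (2*n) := by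
  ext x
  simp only [Finset.mem_add, Finset.mem_Icc]
  constructor
  · rintro ⟨a, ha, b, hb, rfl⟩; omega
  · intro hx
    by_cases h : x ≤ n
    · exact ⟨0, by omega, x, by omega, by ring⟩
    · exact ⟨x - n, by omega, n, by omega, by ring⟩

lemma Icc_sub_Icc' (n : ℤ) (hn : 0 ≤ n) : Icc (0:ℤ) n - Icc (0:ℤ) n = Icc (-n) n := by
  ext x
  simp only [Finset.mem_sub, Finset.mem_Icc]
  constructor
  · rintro ⟨a, ha, b, hb, rfl⟩; omega
  · intro hx
    by_cases h : 0 ≤ x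
    · exact ⟨x, by omega, 0, by omega, by ring⟩
    · exact ⟨0, by omega, -x, by omega, by ring⟩

lemma rsum_Icc (n : ℤ) (hn : 1 ≤ n) : rsum (Icc 0 n) = Icc 1 (2*n - 1) := by
  ext x
  rw [mem_rsum]
  simp only [Finset.mem_Icc]
  constructor
  · rintro ⟨a, ha, b, hb, hne, rfl⟩; omega
  · intro hx
    by_cases h : x ≤ n
    · exact ⟨0, by omega, x, by omega, by omega, by ring⟩
    · exact ⟨x - n, by omega, n, by omega, by omega, by ring⟩

noncomputable def A2 (n : ℤ) : Finset ℤ := (Icc 0 n).erase 2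

lemma mem_A2 {n x : ℤ} : x ∈ A2 n ↔ x ≠ 2 ∧ 0 ≤ x ∧ x ≤ n := by
  simp [A2, Finset.mem_erase, Finset.mem_Icc, and_assoc]

lemma A2_add (n : ℤ) (hn : 5 ≤ n) : A2 n + A2 n = Icc 0 (2*n) := by
  ext x
  simp only [Finset.mem_add, Finset.mem_Icc, mem_A2]
  constructor
  · rintro ⟨a, ha, b, hb, rfl⟩; omega
  · intro hx
    by_cases h2 : x = 2
    · exact ⟨1, by omega, 1, by omega, by omega⟩
    by_cases hn2 : x = n + 2
    · exact ⟨3, by omega, n - 1, by omega, by omega⟩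
    by_cases h : x ≤ n
    · exact ⟨0, by omega, x, by omega, by omega⟩
    · exact ⟨x - n, by omega, n, by omega, by omega⟩

lemma A2_sub (n : ℤ) (hn : 5 ≤ n) : A2 n - A2 n = Icc (-n) n := by
  ext x
  simp only [Finset.mem_sub, Finset.mem_Icc, mem_A2]
  constructor
  · rintro ⟨a, ha, b, hb, rfl⟩; omega
  · intro hx
    by_cases h2 : x = 2
    · exact ⟨3, by omega, 1, by omega, by omega⟩
    by_cases h2' : x = -2
    · exact ⟨1, by omega, 3, by omega, by omega⟩
    by_cases h : 0 ≤ x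
    · exact ⟨x, by omega, 0, by omega, by omega⟩
    · exact ⟨0, by omega, -x, by omega, by omega⟩

lemma rsum_A2 (n : ℤ) (hn : 5 ≤ n) : rsum (A2 n) = (Icc 1 (2*n - 1)).erase 2 := by
  ext x
  rw [mem_rsum]
  simp only [Finset.mem_erase, Finset.mem_Icc, mem_A2]
  constructor
  · rintro ⟨a, ha, b, hb, hne, rfl⟩
    refine ⟨by omega, by omega, by omega⟩
  · rintro ⟨h2, h1, hup⟩
    by_cases hn2 : x = n + 2
    · exact ⟨3, by omega, n - 1, by omega, by omega, by omega⟩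
    by_cases h : x ≤ n
    · exact ⟨0, by omega, x, by omega, by omega, by omega⟩
    · exact ⟨x - n, by omega, n, by omega, by omega, by omega⟩

/-- The family. -/
noncomputable def f (x : ℤ) : Finset ℤ :=
  if x % 2 = 1 then mix (x + 10) (Icc 0 ((x + 9) / 2))
  else mix (x + 15) (A2 ((x + 14) / 2))

lemma card_Icc' (a b : ℤ) (h : a ≤ b) : ((Icc a b).card : ℤ) = b + 1 - a := by
  rw [Int.card_Icc]
  rw [Int.toNat_of_nonneg (by omega)]

lemma main (x : ℤ) (hx : 0 < x) :
    ((rsum (f x)).card : ℤ) - ((f x - f x).card : ℤ) = x := by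
  by_cases hpar : x % 2 = 1
  · -- odd case
    set n : ℤ := (x + 9) / 2 with hn
    have h2n : 2 * n = x + 9 := by omega
    have hn5 : 5 ≤ n := by omega
    have hA : ∀ a ∈ Icc (0:ℤ) n, 0 ≤ a ∧ a ≤ n := by
      intro a ha; exact Finset.mem_Icc.mp ha
    have hM : 2 * n < x + 10 := by omega
    have hf : f x = mix (x + 10) (Icc 0 n) := by rw [f, if_pos hpar]
    rw [hf, card_rsum_mix (Icc 0 n) hA hM, card_mix_sub (Icc 0 n) hA hM,
      Icc_add_Icc' n (by omega), Icc_sub_Icc' n (by omega), rsum_Icc n (by omega),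
      card_rsum_B, card_sdiff_B, card_sub_B]
    push_cast
    rw [card_Icc' 0 (2*n) (by omega), card_Icc' 1 (2*n-1) (by omega),
      card_Icc' (-n) n (by omega)]
    ring_nf
    omega
  · -- even case
    set n : ℤ := (x + 14) / 2 with hn
    have h2n : 2 * n = x + 14 := by omega
    have hn5 : 5 ≤ n := by omega
    have hA : ∀ a ∈ A2 n, 0 ≤ a ∧ a ≤ n := by
      intro a ha
      exact (mem_A2.mp ha).2
    have hM : 2 * n < x + 15 := by omega
    have hf : f x = mix (x + 15) (A2 n) := by rw [f, if_neg hpar]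
    have hcard_er : (((Icc (1:ℤ) (2*n-1)).erase 2).card : ℤ) = 2*n - 2 := by
      rw [Finset.card_erase_of_mem (by simp [Finset.mem_Icc]; omega)]
      have h1 : 1 ≤ (Icc (1:ℤ) (2*n-1)).card := by
        rw [Int.card_Icc]; omega
      push_cast [Int.card_Icc]
      omega
    rw [hf, card_rsum_mix (A2 n) hA hM, card_mix_sub (A2 n) hA hM,
      A2_add n hn5, A2_sub n hn5, rsum_A2 n hn5,
      card_rsum_B, card_sdiff_B, card_sub_B]
    push_cast
    rw [card_Icc' 0 (2*n) (by omega), card_Icc' (-n) n (by omega)]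
    push_cast at hcard_er
    rw [hcard_er]
    ring_nf
    omega

end Stmt17Aux

theorem stmt17 :
    {A : Finset ℤ | (A - A).card < (rsum A).card}.Infinite ∧
    ∃ f : ℤ → Finset ℤ,
      (∀ x : ℤ, 0 < x → ((rsum (f x)).card : ℤ) - ((f x - f x).card) = x) ∧
      (∀ x y : ℤ, 0 < x → 0 < y → x ≠ y → f x ≠ f y) := by
  have hmain := Stmt17Aux.main
  have hinj : ∀ x y : ℤ, 0 < x → 0 < y → x ≠ y → Stmt17Aux.f x ≠ Stmt17Aux.f y := by
    intro x y hx hy hxy h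
    apply hxy
    have h1 := hmain x hx
    have h2 := hmain y hy
    rw [h] at h1
    omega
  constructor
  · apply Set.infinite_of_injOn_mapsTo (f := Stmt17Aux.f) (s := Set.Ioi 0)
    · intro x hx y hy h
      by_contra hne
      exact hinj x y hx hy hne h
    · intro x hx
      have h1 := hmain x hx
      simp only [Set.mem_setOf_eq]
      have hx' : (0:ℤ) < x := hx
      omega
    · exact Set.Ioi_infinite 0
  · exact ⟨Stmt17Aux.f, hmain, hinj⟩
end
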